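/- For all m, n ≥ 0, the number s(m,n) of saturated covers on the grid [m] × [n] satisfies s(m,n) = Σ_{j=2}^{m+2} (−1)^{m−j} · S(m+1, j−1) · (j!/2) · j^n, where S(ℓ,k) denotes the Stirling number of the second kind. -/

import Mathlib

/-- A saturated cover on the grid `[m] × [n] = {0,…,m} × {0,…,n}`.
`H i j = true` means the horizontal edge `(i,j) → (i+1,j)` is present (valid for `i < m`, `j ≤ n`);
`V i j = true` means the vertical edge `(i,j) → (i,j+1)` is present (valid for `i ≤ m`, `j < n`). -/
structure SatCover (m n : ℕ) where
  H : ℕ → ℕ → Bool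
  V : ℕ → ℕ → Bool
  H_bound : ∀ i j, H i j = true → i < m ∧ j ≤ n
  V_bound : ∀ i j, V i j = true → i ≤ m ∧ j < n
  H_down : ∀ i j k, k < j → H i j = true → H i k = true
  V_left : ∀ i j k, k < i → V i j = true → V k j = true
  sq₁ : ∀ i j, H i j = true → H i (j+1) = true → V i j = true → V (i+1) j = true
  sq₂ : ∀ i j, H i j = true → H i (j+1) = true → V (i+1) j = true → V i j = true
  sq₃ : ∀ i j, H i j = true → V i j = true → V (i+1) j = true → H i (j+1) = true
  sq₄ : ∀ i j, H i (j+1) = true → V i j = true → V (i+1) j = true → H i j = true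

/-- `satCount m n` is the number of saturated covers on `[m] × [n]`. -/
noncomputable def satCount (m n : ℕ) : ℕ := Nat.card (SatCover m n)
/-- Stirling numbers of the second kind: `stirling ℓ k` is the number of partitions of an
`ℓ`-element set into `k` nonempty blocks. -/
def stirling : ℕ → ℕ → ℕ
  | 0, 0 => 1
  | 0, _ + 1 => 0
  | _ + 1, 0 => 0
  | l + 1, k + 1 => (k + 1) * stirling l (k + 1) + stirling l k

/-!
A saturated cover is determined by its row lengths `h i ∈ [0, n + 1]` and column lengths
`v j ∈ [0, m + 1]`, subject to two local conditions. More generally, count the covers whose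
first `t` rows miss their top edge. Splitting on whether row `t` has its top edge (if so the row is
full and can be deleted) and, when every row misses it, on the length of the top column, gives
recurrences which determine these counts. The closed form
`∑ⱼ (-1)^(m+j) Δ^(m-t) D_j(t) (j!/2) j^n`, with `D_j(r) = S(r+2, j) - S(r+1, j)`, satisfies the same
recurrences: the first one is the definition of the forward difference `Δ`, the second holds because
`D_j` is an eigenvector, with eigenvalue `j`, of the antidiagonal sum of its difference table, and
the initial values come from `∑ⱼ (-1)^j j! S(l, j) = (-1)^l`. Finally `Δ^m D_j(0) = S(m+1, j-1)`.
-/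

open Finset Nat fwdDiff

theorem stirling_eq_stirlingSecond : stirling = stirlingSecond := by
  funext l k
  induction l generalizing k with
  | zero => cases k <;> rfl
  | succ l ih => cases k <;> simp [stirling, stirlingSecond, ih]

theorem Nat.sum_neg_one_pow_mul_factorial_mul_stirlingSecond :
    ∀ {l N : ℕ}, l < N → ∑ j ∈ range N, (-1 : ℤ) ^ j * j ! * stirlingSecond l j = (-1) ^ l
  | 0, N, h => by
    rw [sum_eq_single_of_mem 0 (mem_range.2 h) fun j _ hj => by
      simp [stirlingSecond_eq_zero_of_lt (Nat.pos_of_ne_zero hj)]]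
    simp
  | l + 1, N + 1, h => by
    have ih := sum_neg_one_pow_mul_factorial_mul_stirlingSecond (l := l) (N := N) (by omega)
    have hshift : ∑ j ∈ range N, (-1 : ℤ) ^ (j + 1) * (j + 1)! * (j + 1) * stirlingSecond l (j + 1)
        = ∑ j ∈ range N, (-1 : ℤ) ^ j * j ! * j * stirlingSecond l j := by
      have := sum_range_succ' (fun j => (-1 : ℤ) ^ j * j ! * j * stirlingSecond l j) N
      rw [sum_range_succ, stirlingSecond_eq_zero_of_lt (by omega : l < N)] at this
      push_cast at this
      linarith
    rw [sum_range_succ', stirlingSecond_succ_zero, pow_succ, ← ih, sum_mul, ← sub_eq_zero,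
      ← sub_eq_zero.2 hshift]
    simp only [CharP.cast_eq_zero, mul_zero, add_zero, ← sum_sub_distrib]
    exact sum_congr rfl fun k _ => by
      rw [stirlingSecond_succ_succ, factorial_succ]
      push_cast
      ring

def stirlingDiff (j r : ℕ) : ℤ := stirlingSecond (r + 2) j - stirlingSecond (r + 1) j

theorem stirlingDiff_zero : stirlingDiff 0 = 0 := by
  funext r
  simp [stirlingDiff]

theorem stirlingDiff_one : stirlingDiff 1 = 0 := by
  funext r
  simp [stirlingDiff, stirlingSecond_one_right]

theorem stirlingDiff_succ_apply_succ (j r : ℕ) :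
    stirlingDiff (j + 1) (r + 1) = (j + 1) * stirlingDiff (j + 1) r + stirlingDiff j r := by
  simp only [stirlingDiff, stirlingSecond_succ_succ]
  push_cast
  ring

theorem fwdDiff_iter_zero (m : ℕ) : (Δ_[1])^[m] (0 : ℕ → ℤ) = 0 :=
  Function.iterate_fixed (fwdDiff_const (h := 1) (0 : ℤ)) m

theorem fwdDiff_iter_stirlingDiff_apply_zero (m j : ℕ) :
    (Δ_[1])^[m] (stirlingDiff j) 0 = stirlingSecond (m + 1) (j - 1) := by
  induction m generalizing j with
  | zero =>
    match j with
    | 0 | 1 | 2 => rfl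
    | j + 3 =>
      simp [stirlingDiff, stirlingSecond_eq_zero_of_lt (show 2 < j + 3 by omega),
        stirlingSecond_eq_zero_of_lt (show 1 < j + 3 by omega),
        stirlingSecond_eq_zero_of_lt (show 1 < j + 2 by omega)]
  | succ m ih =>
    cases j with
    | zero => simp [stirlingDiff_zero, fwdDiff_iter_zero]
    | succ j =>
      have hrec :
          Δ_[1] (stirlingDiff (j + 1)) = (j : ℤ) • stirlingDiff (j + 1) + stirlingDiff j := by
        funext r
        simp only [fwdDiff, stirlingDiff_succ_apply_succ, Pi.add_apply, Pi.smul_apply, smul_eq_mul]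
        ring
      rw [Function.iterate_succ_apply, hrec, fwdDiff_iter_add, fwdDiff_iter_const_smul,
        Pi.add_apply, Pi.smul_apply, ih, ih, smul_eq_mul]
      cases j with
      | zero => simp
      | succ j =>
        simp only [add_tsub_cancel_right, stirlingSecond_succ_succ (m + 1)]
        push_cast
        ring

/-- The sum of `Δ^a f k` along the antidiagonal `a + k = m` of the difference table of `f`,
with the corner `Δ^m f 0` counted twice (at `x = 0` and at `x = 1`). -/
def diagSum (m : ℕ) (f : ℕ → ℤ) : ℤ :=
  ∑ x ∈ range (m + 2), (Δ_[1])^[m - (x - 1)] f (x - 1)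

theorem fwdDiff_iter_succ_apply (f : ℕ → ℤ) (a y : ℕ) :
    (Δ_[1])^[a + 1] f y = (Δ_[1])^[a] (fun r => f (r + 1)) y - (Δ_[1])^[a] f y := by
  rw [Function.iterate_succ_apply', fwdDiff, fwdDiff_iter_comp_add]

theorem diagSum_succ (m : ℕ) (f : ℕ → ℤ) :
    diagSum (m + 1) f = f (m + 1) + diagSum m (fun r => f (r + 1)) - diagSum m f := by
  unfold diagSum
  rw [sum_range_succ, show m + 1 - (m + 2 - 1) = 0 by omega, show m + 2 - 1 = m + 1 by omega,
    Function.iterate_zero_apply, add_comm, add_sub_assoc, ← sum_sub_distrib]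
  congr 1
  refine sum_congr rfl fun x hx => ?_
  rw [show m + 1 - (x - 1) = m - (x - 1) + 1 by have := mem_range.1 hx; omega,
    fwdDiff_iter_succ_apply]

theorem diagSum_add_smul (m : ℕ) (a : ℤ) (f g : ℕ → ℤ) :
    diagSum m (a • f + g) = a * diagSum m f + diagSum m g := by
  simp only [diagSum, fwdDiff_iter_add, fwdDiff_iter_const_smul, Pi.add_apply, Pi.smul_apply,
    smul_eq_mul, sum_add_distrib, mul_sum]

theorem diagSum_stirlingDiff (m j : ℕ) : diagSum m (stirlingDiff j) = j * stirlingDiff j m := by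
  induction m generalizing j with
  | zero =>
    match j with
    | 0 | 1 | 2 => decide
    | j + 3 =>
      simp [diagSum, sum_range_succ, stirlingDiff,
        stirlingSecond_eq_zero_of_lt (show 2 < j + 3 by omega),
        stirlingSecond_eq_zero_of_lt (show 1 < j + 3 by omega)]
  | succ m ih =>
    cases j with
    | zero => simp [diagSum, stirlingDiff_zero, fwdDiff_iter_zero]
    | succ j =>
      have hshift : (fun r => stirlingDiff (j + 1) (r + 1))
          = ((j + 1 : ℕ) : ℤ) • stirlingDiff (j + 1) + stirlingDiff j := by
        funext r
        simp [stirlingDiff_succ_apply_succ]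
      rw [diagSum_succ, hshift, diagSum_add_smul, ih, ih, stirlingDiff_succ_apply_succ]
      push_cast
      ring

theorem Fin.val_succAbove_eq_ite {n : ℕ} (p : Fin (n + 1)) (i : Fin n) :
    (p.succAbove i : ℕ) = if (i : ℕ) < p then (i : ℕ) else (i : ℕ) + 1 := by
  split_ifs with h
  · rw [Fin.succAbove_of_castSucc_lt _ _ (by simpa [Fin.lt_def] using h), Fin.val_castSucc]
  · rw [Fin.succAbove_of_le_castSucc _ _ (by simpa [Fin.le_def] using h), Fin.val_succ]

theorem lt_card_filter_range_iff {P : ℕ → Prop} [DecidablePred P] {N : ℕ}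
    (hdown : ∀ j k, k < j → P j → P k) (hbound : ∀ j, P j → j < N) (j : ℕ) :
    j < #{k ∈ range N | P k} ↔ P j := by
  constructor
  · intro hj
    by_contra hPj
    have hsub : {k ∈ range N | P k} ⊆ range j := fun k hk => by
      obtain ⟨-, hPk⟩ := mem_filter.1 hk
      by_contra hkj
      rcases (not_lt.1 (mem_range.not.1 hkj)).eq_or_lt with rfl | hlt
      · exact hPj hPk
      · exact hPj (hdown k j hlt hPk)
    have := card_le_card hsub
    rw [card_range] at this
    omega
  · intro hPj
    have hsub : range (j + 1) ⊆ {k ∈ range N | P k} := fun k hk => by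
      have hkj := mem_range.1 hk
      refine mem_filter.2 ⟨mem_range.2 (lt_of_le_of_lt (by omega) (hbound j hPj)), ?_⟩
      rcases (Nat.lt_succ_iff.1 hkj).eq_or_lt with rfl | hlt
      exacts [hPj, hdown j k hlt hPj]
    have := card_le_card hsub
    rw [card_range] at this
    omega

namespace SatCover

variable {m n : ℕ}

/-- The terms with `j > m + 2` vanish, so any `N ≥ m + 3` gives the same value. -/
def closedCount (N m t n : ℕ) : ℤ :=
  ∑ j ∈ range N, (-1 : ℤ) ^ (m + j) * (Δ_[1])^[m - t] (stirlingDiff j) t *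
    ((j ! / 2 : ℕ) : ℤ) * (j : ℤ) ^ n

theorem closedCount_succ {N m t : ℕ} (n : ℕ) (h : t ≤ m) :
    closedCount N (m + 1) t n = closedCount N (m + 1) (t + 1) n + closedCount N m t n := by
  simp only [closedCount, ← sum_add_distrib]
  refine sum_congr rfl fun j _ => ?_
  rw [show m + 1 - t = m - t + 1 by omega, show m + 1 - (t + 1) = m - t by omega,
    fwdDiff_iter_succ_apply, fwdDiff_iter_comp_add]
  ring

theorem closedCount_self_succ (N m n : ℕ) :
    closedCount N m m (n + 1) = ∑ x ∈ range (m + 2), closedCount N m (x - 1) n := by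
  unfold closedCount
  rw [sum_comm]
  refine sum_congr rfl fun j _ => ?_
  rw [Nat.sub_self, Function.iterate_zero_apply,
    ← sum_mul, ← sum_mul, ← mul_sum, ← diagSum, diagSum_stirlingDiff]
  ring

theorem two_mul_half_factorial_mul_stirlingDiff (j r : ℕ) :
    2 * ((j ! / 2 : ℕ) : ℤ) * stirlingDiff j r = j ! * stirlingDiff j r := by
  match j with
  | 0 => simp [stirlingDiff_zero]
  | 1 => simp [stirlingDiff_one]
  | j + 2 =>
    rw [← Nat.cast_two, ← Nat.cast_mul, Nat.mul_div_cancel' (Nat.dvd_factorial two_pos (by omega))]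

theorem closedCount_self_zero {N m : ℕ} (h : m + 3 ≤ N) : closedCount N m m 0 = 1 := by
  have hsum : ∀ l, l < N → ∑ j ∈ range N, (-1 : ℤ) ^ (m + j) * (j ! * stirlingSecond l j)
      = (-1) ^ (m + l) := fun l hl => by
    simp only [pow_add, mul_assoc, ← mul_sum]
    simp only [← mul_assoc, sum_neg_one_pow_mul_factorial_mul_stirlingSecond hl]
  have h2 : 2 * closedCount N m m 0 = 2 := by
    simp only [closedCount, Nat.sub_self, Function.iterate_zero_apply, pow_zero, mul_one, mul_sum]
    calc _ = ∑ j ∈ range N, (-1 : ℤ) ^ (m + j) * (j ! * stirlingDiff j m) :=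
          sum_congr rfl fun j _ => by rw [← two_mul_half_factorial_mul_stirlingDiff]; ring
      _ = (-1) ^ (m + (m + 2)) - (-1) ^ (m + (m + 1)) := by
          simp only [stirlingDiff, mul_sub, sum_sub_distrib, hsum (m + 2) (by omega),
            hsum (m + 1) (by omega)]
      _ = 2 := by
          rw [show m + (m + 2) = 2 * (m + 1) by ring, show m + (m + 1) = 2 * m + 1 by ring,
            pow_succ, pow_mul, pow_mul]
          norm_num
  linarith

theorem closedCount_zero (m n : ℕ) :
    closedCount (m + 3) m 0 n = ∑ j ∈ Icc 2 (m + 2),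
      (-1 : ℤ) ^ (m + j) * stirlingSecond (m + 1) (j - 1) * ((j ! / 2 : ℕ) : ℤ) * (j : ℤ) ^ n := by
  simp only [closedCount, Nat.sub_zero, fwdDiff_iter_stirlingDiff_apply_zero]
  refine (sum_subset (fun j hj => ?_) fun j hj hj' => ?_).symm
  · simp only [mem_Icc, mem_range] at hj ⊢
    omega
  have : j < 2 := by
    simp only [mem_Icc, mem_range, not_and, not_le] at hj hj'
    omega
  interval_cases j <;> simp

/-- A saturated cover is encoded by `h i`, the number of horizontal edges `(i,j) → (i+1,j)` it
contains, and `v j`, the number of vertical edges `(i,j) → (i,j+1)`; the only square conditions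
not implied by monotonicity are the two below. -/
def Compatible (h : Fin m → Fin (n + 2)) (v : Fin n → Fin (m + 2)) : Prop :=
  ∀ (i : Fin m) (j : Fin n),
    ((h i : ℕ) = j + 1 → (v j : ℕ) ≤ i + 1) ∧ ((v j : ℕ) = i + 1 → (h i : ℕ) ≤ j + 1)

/-- Compatible pairs in which each of the first `t` rows misses its top edge. -/
abbrev Config (m n t : ℕ) : Type :=
  {p : (Fin m → Fin (n + 2)) × (Fin n → Fin (m + 2)) //
    Compatible p.1 p.2 ∧ ∀ i : Fin m, (i : ℕ) < t → (p.1 i : ℕ) ≤ n}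

theorem ext {S T : SatCover m n} (hH : S.H = T.H) (hV : S.V = T.V) : S = T := by
  cases S
  cases T
  subst hH hV
  rfl

section Encoding

variable (S : SatCover m n)

def rowLength (i : ℕ) : ℕ := #{j ∈ range (n + 1) | S.H i j = true}

def colLength (j : ℕ) : ℕ := #{i ∈ range (m + 1) | S.V i j = true}

theorem lt_rowLength_iff (i j : ℕ) : j < S.rowLength i ↔ S.H i j = true :=
  lt_card_filter_range_iff (S.H_down i) (fun j hj => Nat.lt_succ_of_le (S.H_bound i j hj).2) j

theorem lt_colLength_iff (i j : ℕ) : i < S.colLength j ↔ S.V i j = true :=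
  lt_card_filter_range_iff (fun i k hk => S.V_left i j k hk)
    (fun i hi => Nat.lt_succ_of_le (S.V_bound i j hi).1) i

theorem rowLength_lt (i : ℕ) : S.rowLength i < n + 2 :=
  Nat.lt_succ_of_le ((card_filter_le _ _).trans (card_range _).le)

theorem colLength_lt (j : ℕ) : S.colLength j < m + 2 :=
  Nat.lt_succ_of_le ((card_filter_le _ _).trans (card_range _).le)

theorem compatible_lengths :
    Compatible (fun i : Fin m => ⟨S.rowLength i, S.rowLength_lt i⟩)
      (fun j : Fin n => ⟨S.colLength j, S.colLength_lt j⟩) := by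
  intro i j
  dsimp only
  constructor
  · intro hh
    by_contra hv
    have := (S.lt_rowLength_iff i (j + 1)).2 (S.sq₃ i j ((S.lt_rowLength_iff i j).1 (by omega))
      ((S.lt_colLength_iff i j).1 (by omega)) ((S.lt_colLength_iff (i + 1) j).1 (by omega)))
    omega
  · intro hv
    by_contra hh
    have := (S.lt_colLength_iff (i + 1) j).2 (S.sq₁ i j ((S.lt_rowLength_iff i j).1 (by omega))
      ((S.lt_rowLength_iff i (j + 1)).1 (by omega)) ((S.lt_colLength_iff i j).1 (by omega)))
    omega

def ofCompatible {h : Fin m → Fin (n + 2)} {v : Fin n → Fin (m + 2)} (hc : Compatible h v) :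
    SatCover m n where
  H i j := decide (∃ hi : i < m, j < h ⟨i, hi⟩)
  V i j := decide (∃ hj : j < n, i < v ⟨j, hj⟩)
  H_bound i j hij := by
    obtain ⟨hi, hj⟩ := of_decide_eq_true hij
    exact ⟨hi, by have := (h ⟨i, hi⟩).2; omega⟩
  V_bound i j hij := by
    obtain ⟨hj, hi⟩ := of_decide_eq_true hij
    exact ⟨by have := (v ⟨j, hj⟩).2; omega, hj⟩
  H_down i j k hkj hij := by
    obtain ⟨hi, hj⟩ := of_decide_eq_true hij
    exact decide_eq_true ⟨hi, by omega⟩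
  V_left i j k hki hij := by
    obtain ⟨hj, hi⟩ := of_decide_eq_true hij
    exact decide_eq_true ⟨hj, by omega⟩
  sq₁ i j h₁ h₂ h₃ := by
    obtain ⟨hi, h₁⟩ := of_decide_eq_true h₁
    obtain ⟨_, h₂⟩ := of_decide_eq_true h₂
    obtain ⟨hj, h₃⟩ := of_decide_eq_true h₃
    have := (hc ⟨i, hi⟩ ⟨j, hj⟩).2
    dsimp only at this
    exact decide_eq_true ⟨hj, by omega⟩
  sq₂ i j _ _ h₃ := by
    obtain ⟨hj, h₃⟩ := of_decide_eq_true h₃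
    exact decide_eq_true ⟨hj, by omega⟩
  sq₃ i j h₁ h₂ h₃ := by
    obtain ⟨hi, h₁⟩ := of_decide_eq_true h₁
    obtain ⟨hj, h₂⟩ := of_decide_eq_true h₂
    obtain ⟨_, h₃⟩ := of_decide_eq_true h₃
    have := (hc ⟨i, hi⟩ ⟨j, hj⟩).1
    dsimp only at this
    exact decide_eq_true ⟨hi, by omega⟩
  sq₄ i j h₁ _ _ := by
    obtain ⟨hi, h₁⟩ := of_decide_eq_true h₁
    exact decide_eq_true ⟨hi, by omega⟩

def equivConfig : SatCover m n ≃ Config m n 0 where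
  toFun S := ⟨(fun i => ⟨S.rowLength i, S.rowLength_lt i⟩,
    fun j => ⟨S.colLength j, S.colLength_lt j⟩), S.compatible_lengths,
    fun _ hi => absurd hi (Nat.not_lt_zero _)⟩
  invFun c := ofCompatible c.2.1
  left_inv S := by
    refine ext (funext fun i => funext fun j => ?_) (funext fun i => funext fun j => ?_) <;>
      refine Bool.eq_iff_iff.2 (decide_eq_true_iff.trans ?_)
    · rw [← S.lt_rowLength_iff]
      exact ⟨fun ⟨_, h⟩ => h, fun h => ⟨(S.H_bound i j ((S.lt_rowLength_iff i j).1 h)).1, h⟩⟩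
    · rw [← S.lt_colLength_iff]
      exact ⟨fun ⟨_, h⟩ => h, fun h => ⟨(S.V_bound i j ((S.lt_colLength_iff i j).1 h)).2, h⟩⟩
  right_inv c := by
    refine Subtype.ext (Prod.ext (funext fun i => Fin.ext ?_) (funext fun j => Fin.ext ?_)) <;>
      refine eq_of_forall_lt_iff fun k => ?_
    · rw [lt_rowLength_iff]
      exact decide_eq_true_iff.trans ⟨fun ⟨_, h⟩ => h, fun h => ⟨i.2, h⟩⟩
    · rw [lt_colLength_iff]
      exact decide_eq_true_iff.trans ⟨fun ⟨_, h⟩ => h, fun h => ⟨j.2, h⟩⟩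

end Encoding

theorem card_config_self_zero (m : ℕ) : Nat.card (Config m 0 m) = 1 := by
  refine Nat.card_eq_one_iff_unique.2 ⟨⟨fun a b => ?_⟩, ⟨⟨(0, Fin.elim0), fun _ j => j.elim0,
    fun _ _ => Nat.zero_le _⟩⟩⟩
  refine Subtype.ext (Prod.ext (funext fun i => Fin.ext ?_) (funext fun j => j.elim0))
  have := a.2.2 i i.2
  have := b.2.2 i i.2
  omega

def restrictRowEquiv (p : Fin (m + 1)) :
    {c : Config (m + 1) n p // (c.1.1 p : ℕ) ≤ n} ≃ Config (m + 1) n (p + 1) where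
  toFun c := ⟨c.1.1, c.1.2.1, fun i hi => by
    rcases Nat.lt_succ_iff_lt_or_eq.1 hi with hi | hi
    · exact c.1.2.2 i hi
    · rw [Fin.ext hi]
      exact c.2⟩
  invFun d := ⟨⟨d.1, d.2.1, fun i hi => d.2.2 i (by omega)⟩, d.2.2 p (by omega)⟩
  left_inv _ := rfl
  right_inv _ := rfl

/-- The relabelling of column lengths when row `p` is deleted. -/
abbrev skipAbove (p : Fin (m + 1)) : Fin (m + 2) → Fin (m + 3) := p.succ.castSucc.succAbove

theorem val_skipAbove (p : Fin (m + 1)) (y : Fin (m + 2)) :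
    (skipAbove p y : ℕ) = if (y : ℕ) ≤ p then (y : ℕ) else (y : ℕ) + 1 := by
  simp only [Fin.val_succAbove_eq_ite, Fin.val_castSucc, Fin.val_succ, Nat.lt_succ_iff]

theorem compatible_skipAbove_iff {p : Fin (m + 1)} {h : Fin (m + 1) → Fin (n + 2)}
    (hp : (h p : ℕ) = n + 1) (v : Fin n → Fin (m + 2)) :
    Compatible h (skipAbove p ∘ v) ↔ Compatible (p.removeNth h) v := by
  have hrow : ∀ j : Fin n, ((h p : ℕ) = j + 1 → ((skipAbove p ∘ v) j : ℕ) ≤ p + 1) ∧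
      (((skipAbove p ∘ v) j : ℕ) = p + 1 → (h p : ℕ) ≤ j + 1) := fun j => by
    simp only [Function.comp_apply, val_skipAbove]
    split_ifs <;> omega
  unfold Compatible
  rw [Fin.forall_iff_succAbove p, and_iff_right hrow]
  refine forall_congr' fun k => forall_congr' fun j => ?_
  simp only [Function.comp_apply, val_skipAbove, Fin.val_succAbove_eq_ite (p := p),
    Fin.removeNth_apply]
  split_ifs <;> omega

theorem val_eq_of_not_le {p : Fin (m + 1)} (c : Config (m + 1) n p) (hc : ¬(c.1.1 p : ℕ) ≤ n) :
    (c.1.1 p : ℕ) = n + 1 := by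
  have := (c.1.1 p).2
  omega

theorem skipAbove_predAbove (p : Fin (m + 1)) (c : Config (m + 1) n p)
    (hc : ¬(c.1.1 p : ℕ) ≤ n) (j : Fin n) : skipAbove p (p.succ.predAbove (c.1.2 j)) = c.1.2 j := by
  refine Fin.succAbove_predAbove fun hv => ?_
  have := (c.2.1 p j).2 (by rw [hv]; rfl)
  omega

/-- A row containing its top edge contains every horizontal edge, so it can be deleted. -/
def removeRowEquiv (p : Fin (m + 1)) :
    {c : Config (m + 1) n p // ¬(c.1.1 p : ℕ) ≤ n} ≃ Config m n p where
  toFun c := ⟨(p.removeNth c.1.1.1, fun j => p.succ.predAbove (c.1.1.2 j)),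
    (compatible_skipAbove_iff (val_eq_of_not_le c.1 c.2) _).1 (by
      convert c.1.2.1
      exact funext (skipAbove_predAbove p c.1 c.2)),
    fun k hk => c.1.2.2 _ (by rw [Fin.val_succAbove_eq_ite, if_pos hk]; exact hk)⟩
  invFun d := ⟨⟨(p.insertNth (Fin.last _) d.1.1, skipAbove p ∘ d.1.2),
    (compatible_skipAbove_iff (by simp) _).2 (by rw [Fin.removeNth_insertNth]; exact d.2.1),
    fun i hi => by
      obtain ⟨k, rfl⟩ := Fin.exists_succAbove_eq (fun h => (lt_irrefl _ (h ▸ hi)) : i ≠ p)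
      simp only [Fin.insertNth_apply_succAbove]
      refine d.2.2 k ?_
      rw [Fin.val_succAbove_eq_ite] at hi
      split_ifs at hi <;> omega⟩, by simp⟩
  left_inv c := by
    refine Subtype.ext (Subtype.ext (Prod.ext ?_ (funext (skipAbove_predAbove p c.1 c.2))))
    dsimp only
    have hlast : Fin.last (n + 1) = c.1.1.1 p := Fin.ext (val_eq_of_not_le c.1 c.2).symm
    rw [Fin.insertNth_removeNth, hlast, Function.update_eq_self]
  right_inv d := by
    refine Subtype.ext (Prod.ext ?_ (funext fun j => Fin.predAbove_succAbove p.succ (d.1.2 j)))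
    dsimp only
    rw [Fin.removeNth_insertNth]

theorem card_config_succ {t : ℕ} (ht : t ≤ m) :
    Nat.card (Config (m + 1) n t) =
      Nat.card (Config (m + 1) n (t + 1)) + Nat.card (Config m n t) := by
  let p : Fin (m + 1) := ⟨t, Nat.lt_succ_of_le ht⟩
  rw [← Nat.card_congr (restrictRowEquiv (n := n) p), ← Nat.card_congr (removeRowEquiv (n := n) p),
    ← Nat.card_sum, Nat.card_congr (Equiv.sumCompl _)]

theorem compatible_snoc_iff (h : Fin m → Fin (n + 2)) (v : Fin n → Fin (m + 2)) (x : Fin (m + 2)) :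
    Compatible (fun i => (h i).castSucc) (Fin.snoc v x) ↔
      Compatible h v ∧ ∀ i : Fin m, (i : ℕ) < x - 1 → (h i : ℕ) ≤ n := by
  unfold Compatible
  rw [forall_congr' fun i => Fin.forall_fin_succ', forall_and]
  simp only [Fin.snoc_castSucc, Fin.snoc_last, Fin.val_castSucc, Fin.val_last]
  refine and_congr_right' (forall_congr' fun i => ?_)
  constructor
  · intro hi _
    omega
  · intro hi
    constructor <;> intro <;> omega

/-- Cutting off the top row of squares, whose vertical edges form a prefix of length `x`: a row
`i` with `i + 1 < x` reaching the new top would leave the square above it with three sides. -/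
def topColumnEquiv : Config m (n + 1) m ≃ Σ x : Fin (m + 2), Config m n (x - 1) where
  toFun c := ⟨c.1.2 (Fin.last n),
    ⟨(fun i => ⟨c.1.1 i, by have := c.2.2 i i.2; omega⟩, Fin.init c.1.2),
      (compatible_snoc_iff _ _ _).1 (by
        rw [Fin.snoc_init_self]
        exact c.2.1)⟩⟩
  invFun d := ⟨((fun i => (d.2.1.1 i).castSucc), Fin.snoc d.2.1.2 d.1),
    (compatible_snoc_iff _ _ _).2 d.2.2, fun i _ => by simp only [Fin.val_castSucc]; omega⟩
  left_inv c := Subtype.ext (Prod.ext rfl (Fin.snoc_init_self _))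
  right_inv d := by
    refine Sigma.subtype_ext ?_ (Prod.ext rfl ?_) <;> dsimp only
    · rw [Fin.snoc_last]
    · rw [Fin.init_snoc]

theorem card_config_self_succ (m n : ℕ) :
    Nat.card (Config m (n + 1) m) = ∑ x ∈ range (m + 2), Nat.card (Config m n (x - 1)) := by
  rw [Nat.card_congr topColumnEquiv, Nat.card_sigma,
    Fin.sum_univ_eq_sum_range (fun x => Nat.card (Config m n (x - 1)))]

theorem card_config_eq_closedCount_of_self {N : ℕ} (n : ℕ)
    (hself : ∀ m, m + 3 ≤ N → (Nat.card (Config m n m) : ℤ) = closedCount N m m n)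
    {m t : ℕ} (ht : t ≤ m) (hN : m + 3 ≤ N) :
    (Nat.card (Config m n t) : ℤ) = closedCount N m t n := by
  obtain ⟨s, rfl⟩ := Nat.exists_eq_add_of_le ht
  induction s generalizing t with
  | zero => exact hself t hN
  | succ s ih =>
    rw [← add_assoc, card_config_succ (Nat.le_add_right t s), closedCount_succ n (by omega),
      Nat.cast_add, show t + s + 1 = t + 1 + s by omega, ih (by omega) (by omega),
      ih (by omega) (by omega)]

theorem card_config_eq_closedCount {N : ℕ} (n : ℕ) {m t : ℕ} (ht : t ≤ m) (hN : m + 3 ≤ N) :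
    (Nat.card (Config m n t) : ℤ) = closedCount N m t n := by
  induction n generalizing m t with
  | zero =>
    refine card_config_eq_closedCount_of_self 0 (fun m hm => ?_) ht hN
    rw [card_config_self_zero, closedCount_self_zero hm, Nat.cast_one]
  | succ n ih =>
    refine card_config_eq_closedCount_of_self (n + 1) (fun m hm => ?_) ht hN
    rw [card_config_self_succ, closedCount_self_succ, Nat.cast_sum]
    exact sum_congr rfl fun x hx => ih (by have := mem_range.1 hx; omega) hm

end SatCover

theorem stmt_2 (m n : ℕ) :
    (satCount m n : ℤ) =
      ∑ j ∈ Finset.Icc 2 (m + 2),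
        (-1 : ℤ) ^ (m + j) * stirling (m + 1) (j - 1) * ((Nat.factorial j / 2 : ℕ) : ℤ) *
          (j : ℤ) ^ n := by
  rw [satCount, Nat.card_congr SatCover.equivConfig,
    SatCover.card_config_eq_closedCount n (Nat.zero_le m) le_rfl, SatCover.closedCount_zero,
    stirling_eq_stirlingSecond]
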